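/- arXiv:1306.2478 — 3 statements merged into one kernel-verified Lean document; each statement's English description precedes it below -/
import Mathlib

section
/- Let w : [0,∞) → ℝ be smooth with w(0)=0, w'(0)=1, w > 0 and w' > 0 on (0,∞). If (1/w² - (w'/w)²) ≥ -w''/w on (0,∞) and the function r ↦ -w''(r)/w(r) is non-increasing, then -w''/w ≥ -w'''/w' on (0,∞). -/
/-- An antitone function on `Ioi 0` has nonpositive derivative at points of `Ioi 0`. -/
lemma antitoneOn_Ioi_deriv_nonpos {f : ℝ → ℝ} {r : ℝ} (hr : 0 < r)
    (hf : AntitoneOn f (Set.Ioi 0)) (hd : DifferentiableAt ℝ f r) : deriv f r ≤ 0 := by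
  have hslope : Filter.Tendsto (slope f r) (nhdsWithin r {r}ᶜ) (nhds (deriv f r)) :=
    hasDerivAt_iff_tendsto_slope.mp hd.hasDerivAt
  have hsub : nhdsWithin r (Set.Ioi r) ≤ nhdsWithin r {r}ᶜ :=
    nhdsWithin_mono r (fun x hx => ne_of_gt hx)
  have hslope' : Filter.Tendsto (slope f r) (nhdsWithin r (Set.Ioi r)) (nhds (deriv f r)) :=
    hslope.mono_left hsub
  refine le_of_tendsto hslope' ?_
  filter_upwards [self_mem_nhdsWithin] with x hx
  have hx' : r < x := hx
  have h1 : f x ≤ f r := hf (Set.mem_Ioi.mpr hr) (Set.mem_Ioi.mpr (hr.trans hx')) hx'.le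
  have : slope f r x = (f x - f r) / (x - r) := by
    simp [slope_def_field, div_eq_div_iff]
  rw [this]
  exact div_nonpos_of_nonpos_of_nonneg (by linarith) (by linarith)

/-- If `w` is smooth with `w 0 = 0`, `w' 0 = 1`, `w > 0` and `w' > 0` on `(0,∞)`,
`1/w² - (w'/w)² ≥ -w''/w` on `(0,∞)` and `r ↦ -w''(r)/w(r)` is non-increasing, then
`-w''/w ≥ -w'''/w'` on `(0,∞)`. -/
theorem stmt_0 (w : ℝ → ℝ) (hw_smooth : ContDiff ℝ (⊤ : ℕ∞) w)
    (hw0 : w 0 = 0) (hw'0 : deriv w 0 = 1)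
    (hw_pos : ∀ r ∈ Set.Ioi (0:ℝ), 0 < w r)
    (hw'_pos : ∀ r ∈ Set.Ioi (0:ℝ), 0 < deriv w r)
    (hfiber : ∀ r ∈ Set.Ioi (0:ℝ),
      -(deriv (deriv w) r) / w r ≤ 1 / (w r) ^ 2 - (deriv w r / w r) ^ 2)
    (hmono : AntitoneOn (fun r => -(deriv (deriv w) r) / w r) (Set.Ioi 0)) :
    ∀ r ∈ Set.Ioi (0:ℝ),
      -(deriv (deriv (deriv w)) r) / deriv w r ≤ -(deriv (deriv w) r) / w r := by
  intro r hr
  have hr0 : (0:ℝ) < r := hr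
  obtain ⟨hwd, hwd1⟩ := contDiff_infty_iff_deriv.mp (hw_smooth.of_le (by simp))
  obtain ⟨hwd', hwd2⟩ := contDiff_infty_iff_deriv.mp hwd1
  have hwd'' : Differentiable ℝ (deriv (deriv w)) := (contDiff_infty_iff_deriv.mp hwd2).1
  have hwr : 0 < w r := hw_pos r hr
  have hw'r : 0 < deriv w r := hw'_pos r hr
  -- differentiability of the quotient
  have hnum : DifferentiableAt ℝ (fun x => -(deriv (deriv w) x)) r := (hwd'' r).neg
  have hq : DifferentiableAt ℝ (fun x => -(deriv (deriv w) x) / w x) r :=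
    hnum.div (hwd r) hwr.ne'
  have hderiv : deriv (fun x => -(deriv (deriv w) x) / w x) r =
      ((-(deriv (deriv (deriv w)) r)) * w r - (-(deriv (deriv w) r)) * deriv w r) / (w r) ^ 2 := by
    rw [deriv_fun_div hnum (hwd r) hwr.ne']
    congr 1
    rw [deriv.fun_neg]
  have hle : deriv (fun x => -(deriv (deriv w) x) / w x) r ≤ 0 :=
    antitoneOn_Ioi_deriv_nonpos hr0 hmono hq
  rw [hderiv] at hle
  have hnumle : (-(deriv (deriv (deriv w)) r)) * w r - (-(deriv (deriv w) r)) * deriv w r ≤ 0 := by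
    have hsq : (0:ℝ) < (w r) ^ 2 := by positivity
    by_contra h
    push_neg at h
    have := div_pos h hsq
    linarith
  rw [div_le_div_iff₀ hw'r hwr]
  linarith
end

section
/- The warping function w(r) = (1/2)·arcsinh(2r) satisfies, for all r > 0: 1/w(r)² - (w'(r)/w(r))² ≥ -w''(r)/w(r) > -w'''(r)/w'(r). -/
/-!
With `a = w'(r) = (1 + 4r²)^(-1/2)` one has `w'' = -4r·a³` and, using `a²(1 + 4r²) = 1`,
`w''' = 4(8r² - 1)·a⁵`. After clearing the positive denominators the two inequalities read
`a·w(r) ≤ r` and `(1 - 8r²)·a·w(r) < r`; both follow from `0 < a ≤ 1` and `0 < w(r) < r`,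
the last being `arsinh x < x` for `x > 0`.
-/

open Real

lemma Real.arsinh_lt_self {x : ℝ} (hx : 0 < x) : arsinh x < x := by
  simpa only [arsinh_sinh] using arsinh_lt_arsinh.2 (self_lt_sinh_iff.2 hx)

namespace Paraboloid

noncomputable def warp (s : ℝ) : ℝ := 1 / 2 * arsinh (2 * s)

noncomputable def warpDeriv (s : ℝ) : ℝ := (√(1 + 4 * s ^ 2))⁻¹

lemma warp_pos {r : ℝ} (hr : 0 < r) : 0 < warp r :=
  mul_pos one_half_pos (arsinh_pos_iff.2 (by positivity))

lemma warp_lt_self {r : ℝ} (hr : 0 < r) : warp r < r := by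
  unfold warp; linarith [arsinh_lt_self (by positivity : 0 < 2 * r)]

lemma warpDeriv_pos (s : ℝ) : 0 < warpDeriv s := by unfold warpDeriv; positivity

lemma warpDeriv_sq_mul (s : ℝ) : warpDeriv s ^ 2 * (1 + 4 * s ^ 2) = 1 := by
  rw [warpDeriv, inv_pow, sq_sqrt (by positivity), inv_mul_cancel₀ (by positivity)]

lemma warpDeriv_le_one (s : ℝ) : warpDeriv s ≤ 1 := by
  nlinarith [warpDeriv_sq_mul s, warpDeriv_pos s, sq_nonneg s]

lemma hasDerivAt_warp (s : ℝ) : HasDerivAt warp (warpDeriv s) s := by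
  have h := (((hasDerivAt_id' s).const_mul 2).arsinh).const_mul (1 / 2 : ℝ)
  refine h.congr_deriv ?_
  rw [warpDeriv, mul_pow]
  norm_num
  ring

lemma hasDerivAt_warpDeriv (s : ℝ) : HasDerivAt warpDeriv (-4 * s * warpDeriv s ^ 3) s := by
  have hA : HasDerivAt (fun s : ℝ => 1 + 4 * s ^ 2) (8 * s) s := by
    refine (((hasDerivAt_pow 2 s).const_mul 4).const_add 1).congr_deriv ?_
    ring
  refine ((hA.sqrt (by positivity)).inv (by positivity)).congr_deriv ?_
  rw [warpDeriv]
  field_simp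
  ring

lemma hasDerivAt_neg_four_mul_warpDeriv_pow (s : ℝ) :
    HasDerivAt (fun s => -4 * s * warpDeriv s ^ 3) (4 * (8 * s ^ 2 - 1) * warpDeriv s ^ 5) s := by
  refine (((hasDerivAt_id' s).const_mul (-4)).mul ((hasDerivAt_warpDeriv s).pow 3)).congr_deriv ?_
  rw [Pi.pow_apply]
  linear_combination 4 * warpDeriv s ^ 3 * warpDeriv_sq_mul s

lemma deriv_warp : deriv warp = warpDeriv := funext fun s => (hasDerivAt_warp s).deriv

lemma deriv_warpDeriv : deriv warpDeriv = fun s => -4 * s * warpDeriv s ^ 3 :=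
  funext fun s => (hasDerivAt_warpDeriv s).deriv

lemma deriv_neg_four_mul_warpDeriv_pow :
    deriv (fun s => -4 * s * warpDeriv s ^ 3) = fun s => 4 * (8 * s ^ 2 - 1) * warpDeriv s ^ 5 :=
  funext fun s => (hasDerivAt_neg_four_mul_warpDeriv_pow s).deriv

theorem neg_deriv_deriv_div_warp_le {r : ℝ} (hr : 0 < r) :
    -deriv (deriv warp) r / warp r ≤ 1 / warp r ^ 2 - (deriv warp r / warp r) ^ 2 := by
  rw [deriv_warp, deriv_warpDeriv]
  set a := warpDeriv r
  set W := warp r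
  have hW : 0 < W := warp_pos hr
  have haW : a * W < r := by
    nlinarith [warpDeriv_le_one r, warp_lt_self hr]
  have h : 1 / W ^ 2 - (a / W) ^ 2 - -(-4 * r * a ^ 3) / W = 4 * r * a ^ 2 * (r - a * W) / W ^ 2 := by
    field_simp
    linear_combination -warpDeriv_sq_mul r
  rw [← sub_nonneg, h]
  exact div_nonneg (mul_nonneg (by positivity) (by linarith)) (sq_nonneg W)

theorem neg_deriv_deriv_deriv_div_lt {r : ℝ} (hr : 0 < r) :
    -deriv (deriv (deriv warp)) r / deriv warp r < -deriv (deriv warp) r / warp r := by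
  rw [deriv_warp, deriv_warpDeriv, deriv_neg_four_mul_warpDeriv_pow]
  set a := warpDeriv r
  set W := warp r
  have ha : 0 < a := warpDeriv_pos r
  have hW : 0 < W := warp_pos hr
  have haW : (1 - 8 * r ^ 2) * a * W < r := by
    nlinarith [warpDeriv_le_one r, warp_lt_self hr, mul_pos ha hW]
  have h : -(-4 * r * a ^ 3) / W - -(4 * (8 * r ^ 2 - 1) * a ^ 5) / a
      = 4 * a ^ 3 * (r - (1 - 8 * r ^ 2) * a * W) / W := by
    field_simp
    ring
  rw [← sub_pos, h]
  exact div_pos (mul_pos (by positivity) (by linarith)) hW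

end Paraboloid

/-- The warping function `w(r) = (1/2)·arcsinh(2r)` of the generalized paraboloid
satisfies `1/w² - (w'/w)² ≥ -w''/w > -w'''/w'` for all `r > 0`. -/
theorem stmt_2 (w : ℝ → ℝ) (hw : w = fun s => (1/2) * Real.arsinh (2*s)) :
    ∀ r ∈ Set.Ioi (0:ℝ),
      -(deriv (deriv w) r) / w r ≤ 1 / (w r) ^ 2 - (deriv w r / w r) ^ 2 ∧
      -(deriv (deriv (deriv w)) r) / deriv w r < -(deriv (deriv w) r) / w r := by
  obtain rfl : w = Paraboloid.warp := hw
  exact fun r hr => ⟨Paraboloid.neg_deriv_deriv_div_warp_le hr,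
    Paraboloid.neg_deriv_deriv_deriv_div_lt hr⟩
end

section
/- Let μ : [R₀,∞) → (0,∞) be a non-decreasing differentiable function, and suppose there are constants a > 0 and b_0 ≥ 0 such that a − b_0·μ(R)^(−1/p) ≤ (d/dR) log μ(R) for all R ≥ R₀ and some p ≥ 1. If sup_{R} μ(R) = L < ∞, then L^(1/p) ≤ b_0/a. -/
/-!
If `L ^ (1/p) > b₀/a`, some `μ R₁` already satisfies `μ R₁ ^ (1/p) > b₀/a`. Since `μ` is
non-decreasing, the lower bound `a - b₀ μ(R)^(-1/p)` for `(log μ)'` only improves beyond `R₁`, so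
`log μ` grows at least linearly with positive slope there, which contradicts `μ ≤ L`.
-/

open Set

theorem not_bddAbove_image_Ici_of_le_deriv {f : ℝ → ℝ} {x₀ c : ℝ} (hc : 0 < c)
    (hf : ∀ x ∈ Ici x₀, DifferentiableAt ℝ f x) (hf' : ∀ x ∈ Ici x₀, c ≤ deriv f x) :
    ¬ BddAbove (f '' Ici x₀) := by
  rintro ⟨M, hM⟩
  have hgrowth : ∀ x ∈ Ici x₀, c * (x - x₀) ≤ f x - f x₀ := fun x hx =>
    (convex_Ici x₀).mul_sub_le_image_sub_of_le_deriv
      (fun y hy => (hf y hy).continuousAt.continuousWithinAt)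
      (fun y hy => (hf y (interior_subset hy)).differentiableWithinAt)
      (fun y hy => hf' y (interior_subset hy)) x₀ self_mem_Ici x hx hx
  have hfx₀ : f x₀ ≤ M := hM (mem_image_of_mem f self_mem_Ici)
  set x := x₀ + (M - f x₀ + 1) / c with hx
  have hx₀x : x₀ ≤ x := le_add_of_nonneg_right (div_nonneg (by linarith) hc.le)
  have hcx : c * (x - x₀) = M - f x₀ + 1 := by
    rw [hx, add_sub_cancel_left, mul_div_cancel₀ _ hc.ne']
  have := hgrowth x hx₀x
  have := hM (mem_image_of_mem f (mem_Ici.2 hx₀x))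
  linarith

theorem Real.sub_mul_rpow_neg_pos_of_div_lt_rpow {a b x q : ℝ} (ha : 0 < a) (hx : 0 < x)
    (h : b / a < x ^ q) : 0 < a - b * x ^ (-q) := by
  rw [Real.rpow_neg hx.le, ← div_eq_mul_inv, sub_pos, div_lt_iff₀ (Real.rpow_pos_of_pos hx q)]
  rwa [div_lt_iff₀' ha] at h

/-- volume gap: if `μ` is positive non-decreasing differentiable on `[R₀,∞)` with
`a − b₀·μ(R)^(−1/p) ≤ (log μ)'(R)` for all `R ≥ R₀`, and `L = sup μ < ∞`, then
`L^(1/p) ≤ b₀/a`. -/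
theorem stmt_7 (R₀ a b₀ p L : ℝ) (ha : 0 < a) (hb : 0 ≤ b₀) (hp : 1 ≤ p)
    (μ : ℝ → ℝ) (hμpos : ∀ R ∈ Set.Ici R₀, 0 < μ R)
    (hμmono : MonotoneOn μ (Set.Ici R₀))
    (hμdiff : ∀ R ∈ Set.Ici R₀, DifferentiableAt ℝ μ R)
    (hODE : ∀ R ∈ Set.Ici R₀,
      a - b₀ * μ R ^ (-(1:ℝ)/p) ≤ deriv (fun s => Real.log (μ s)) R)
    (hL : IsLUB (μ '' Set.Ici R₀) L) :
    L ^ (1/p) ≤ b₀ / a := by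
  by_contra! hgap
  have hp₀ : 0 < p := zero_lt_one.trans_le hp
  have hμL : ∀ R ∈ Ici R₀, μ R ≤ L := fun R hR => hL.1 (mem_image_of_mem μ hR)
  have hba : 0 ≤ b₀ / a := div_nonneg hb ha.le
  rw [one_div] at hgap
  have hbaL := (Real.lt_rpow_inv_iff_of_pos hba ((hμpos R₀ self_mem_Ici).le.trans
    (hμL R₀ self_mem_Ici)) hp₀).1 hgap
  obtain ⟨_, ⟨R₁, hR₁, rfl⟩, hR₁gap, -⟩ := hL.exists_between hbaL
  have hμR₁ := hμpos R₁ hR₁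
  have hslope : 0 < a - b₀ * μ R₁ ^ (-(1:ℝ)/p) := by
    rw [neg_div, ← inv_eq_one_div]
    exact Real.sub_mul_rpow_neg_pos_of_div_lt_rpow ha hμR₁
      ((Real.lt_rpow_inv_iff_of_pos hba hμR₁.le hp₀).2 hR₁gap)
  have hIci : Ici R₁ ⊆ Ici R₀ := Ici_subset_Ici.2 hR₁
  refine not_bddAbove_image_Ici_of_le_deriv hslope
    (fun R hR => (hμdiff R (hIci hR)).log (hμpos R (hIci hR)).ne') (fun R hR => ?_)
    ⟨Real.log L, ?_⟩
  · refine le_trans ?_ (hODE R (hIci hR))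
    gcongr a - b₀ * ?_
    exact Real.rpow_le_rpow_of_nonpos hμR₁ (hμmono hR₁ (hIci hR) hR)
      (div_nonpos_of_nonpos_of_nonneg (by norm_num) hp₀.le)
  · rintro _ ⟨R, hR, rfl⟩
    exact Real.log_le_log (hμpos R (hIci hR)) (hμL R (hIci hR))
end
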